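/- Let k be a field, q ∈ k not a root of unity, a, b ≥ 2, and A = k⟨X,Y⟩/(X^a, XY − qYX, Y^b). Let ν be the algebra automorphism of A determined by ν(x) = q^{1−b} x and ν(y) = q^{a−1} y. Define d : A ⊕ A → A by d(y^u x^v, 0) = (q^{u+1−b} − 1) y^u x^{v+1} and d(0, y^u x^v) = (q^{a−1} − q^v) y^{u+1} x^v. Then a basis monomial y^u x^v (0 ≤ u < b, 0 ≤ v < a) lies in the image of d if and only if (u,v) ∉ {(0,0), (b−1, a−1)}; hence dim_k(Im d) = ab − 2. -/

import Mathlib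

/-- The relations defining the quantum complete intersection
`k⟨X,Y⟩/(X^a, XY - qYX, Y^b)` (`true` ↦ `X`, `false` ↦ `Y`). -/
inductive QCIRel (k : Type*) [Field k] (q : k) (a b : ℕ) :
    FreeAlgebra k Bool → FreeAlgebra k Bool → Prop
  | xa : QCIRel k q a b ((FreeAlgebra.ι k true) ^ a) 0
  | yb : QCIRel k q a b ((FreeAlgebra.ι k false) ^ b) 0
  | comm : QCIRel k q a b (FreeAlgebra.ι k true * FreeAlgebra.ι k false)
      (q • (FreeAlgebra.ι k false * FreeAlgebra.ι k true))

/-- The quantum complete intersection `A = k⟨X,Y⟩/(X^a, XY - qYX, Y^b)`. -/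
abbrev QCI (k : Type*) [Field k] (q : k) (a b : ℕ) : Type _ := RingQuot (QCIRel k q a b)

/-- The image `x` of `X` in `A`. -/
noncomputable def qciX (k : Type*) [Field k] (q : k) (a b : ℕ) : QCI k q a b :=
  RingQuot.mkAlgHom k (QCIRel k q a b) (FreeAlgebra.ι k true)

/-- The image `y` of `Y` in `A`. -/
noncomputable def qciY (k : Type*) [Field k] (q : k) (a b : ℕ) : QCI k q a b :=
  RingQuot.mkAlgHom k (QCIRel k q a b) (FreeAlgebra.ι k false)

/-!
The monomials `y^u x^v` with `u < b`, `v < a` form a basis of `A`. They span because their span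
is closed under multiplication (`x^v y^s = q^{vs} y^s x^v`) and contains `x` and `y`. They are
linearly independent because `A` acts on `k[ℕ × ℕ]` by letting `x` and `y` act as truncated,
`q`-twisted shifts, and then `y^u x^v` sends the basis vector at `(0,0)` to the one at `(u,v)`.

In this basis `d` sends each monomial to a multiple of a monomial of higher degree, and since `q`
is not a root of unity the multiple vanishes only when `u = b - 1` (first summand) or `v = a - 1`
(second summand). Hence `Im d` is spanned by the monomials it hits, which are all of them except
`1`, which has degree `0`, and `y^{b-1} x^{a-1}`, which is reached only with coefficient zero.
-/

lemma pow_mul_pow_eq_smul_of_mul_eq_smul {R A : Type*} [CommSemiring R] [Semiring A]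
    [Algebra R A] {q : R} {x y : A} (h : x * y = q • (y * x)) (v s : ℕ) :
    x ^ v * y ^ s = q ^ (v * s) • (y ^ s * x ^ v) := by
  have mul_pow_eq (s : ℕ) : x * y ^ s = q ^ s • (y ^ s * x) := by
    induction s with
    | zero => simp
    | succ s ih =>
      rw [pow_succ, ← mul_assoc, ih, smul_mul_assoc, mul_assoc, h, mul_smul_comm, smul_smul,
        ← mul_assoc, pow_succ]
  induction v with
  | zero => simp
  | succ v ih =>
    rw [pow_succ, mul_assoc, mul_pow_eq, mul_smul_comm, ← mul_assoc, ih, smul_mul_assoc,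
      smul_smul, mul_assoc, ← pow_succ, ← pow_add, add_comm s, add_one_mul]

theorem zpow_injective_of_pow_ne_one {G₀ : Type*} [GroupWithZero G₀] {q : G₀} (hq0 : q ≠ 0)
    (hq : ∀ n : ℕ, 1 ≤ n → q ^ n ≠ 1) : Function.Injective fun n : ℤ => q ^ n := by
  have hfin : ¬IsOfFinOrder (Units.mk0 q hq0) := by
    rw [isOfFinOrder_iff_pow_eq_one]
    rintro ⟨n, hn, h⟩
    exact hq n hn (by simpa [Units.ext_iff] using h)
  intro m n hmn
  exact injective_zpow_iff_not_isOfFinOrder.mpr hfin (Units.ext (by simpa using hmn))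

theorem LinearIndepOn.apply_mem_span_image_iff {K V ι : Type*} [DivisionRing K]
    [AddCommGroup V] [Module K V] {f : ι → V} {s t : Set ι} (h : LinearIndepOn K f s)
    (hts : t ⊆ s) {i : ι} (hi : i ∈ s) : f i ∈ Submodule.span K (f '' t) ↔ i ∈ t := by
  rw [(h.mono hts).mem_span_iff]
  exact ⟨fun H => H (h.mono (Set.insert_subset hi hts)), fun H _ => H⟩

theorem LinearIndepOn.finrank_span_image {K V ι : Type*} [DivisionRing K] [AddCommGroup V]
    [Module K V] {f : ι → V} {s : Finset ι} (h : LinearIndepOn K f s) :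
    Module.finrank K (Submodule.span K (f '' s)) = s.card := by
  rw [Set.image_eq_range, finrank_span_eq_card h]
  simp

lemma LinearMap.mem_range_of_apply_eq_smul {K M N : Type*} [DivisionRing K] [AddCommGroup M]
    [Module K M] [AddCommGroup N] [Module K N] (f : M →ₗ[K] N) {m : M} {n : N} {c : K}
    (hc : c ≠ 0) (h : f m = c • n) : n ∈ LinearMap.range f :=
  (Submodule.smul_mem_iff _ hc).mp (h ▸ LinearMap.mem_range_self f m)

namespace QCI

open Finsupp

variable {k : Type*} [Field k] (q : k) (a b : ℕ)

lemma qciX_pow_eq_zero : qciX k q a b ^ a = 0 := by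
  rw [qciX, ← map_pow, RingQuot.mkAlgHom_rel k QCIRel.xa, map_zero]

lemma qciY_pow_eq_zero : qciY k q a b ^ b = 0 := by
  rw [qciY, ← map_pow, RingQuot.mkAlgHom_rel k QCIRel.yb, map_zero]

lemma qciX_mul_qciY : qciX k q a b * qciY k q a b = q • (qciY k q a b * qciX k q a b) := by
  rw [qciX, qciY, ← map_mul, RingQuot.mkAlgHom_rel k QCIRel.comm, map_smul, map_mul]

lemma adjoin_qciX_qciY : Algebra.adjoin k {qciX k q a b, qciY k q a b} = ⊤ := by
  have hgen : {qciX k q a b, qciY k q a b} =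
      RingQuot.mkAlgHom k (QCIRel k q a b) '' Set.range (FreeAlgebra.ι k) := by
    rw [← Set.range_comp]
    ext z
    simp [qciX, qciY, or_comm]
  rw [hgen, Algebra.adjoin_image, FreeAlgebra.adjoin_range_ι, Algebra.map_top,
    AlgHom.range_eq_top]
  exact RingQuot.mkAlgHom_surjective k _

noncomputable def monomial (p : ℕ × ℕ) : QCI k q a b := qciY k q a b ^ p.1 * qciX k q a b ^ p.2

def box : Finset (ℕ × ℕ) := Finset.range b ×ˢ Finset.range a

def corners : Finset (ℕ × ℕ) := {(0, 0), (b - 1, a - 1)}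

@[simp] lemma mem_box {u v : ℕ} : (u, v) ∈ box a b ↔ u < b ∧ v < a := by
  simp [box]

lemma monomial_mul (p r : ℕ × ℕ) :
    monomial q a b p * monomial q a b r = q ^ (p.2 * r.1) • monomial q a b (p + r) := by
  simp only [monomial, Prod.fst_add, Prod.snd_add, pow_add]
  rw [mul_assoc, ← mul_assoc (_ ^ p.2),
    pow_mul_pow_eq_smul_of_mul_eq_smul (qciX_mul_qciY q a b), smul_mul_assoc, mul_smul_comm]
  simp only [mul_assoc]

lemma monomial_eq_zero {p : ℕ × ℕ} (hp : p ∉ box a b) : monomial q a b p = 0 := by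
  obtain ⟨u, v⟩ := p
  rw [mem_box, not_and_or, not_lt, not_lt] at hp
  rcases hp with hu | hv
  · rw [monomial, ← Nat.add_sub_cancel' hu, pow_add, qciY_pow_eq_zero, zero_mul, zero_mul]
  · rw [monomial, ← Nat.add_sub_cancel' hv, pow_add, qciX_pow_eq_zero, zero_mul, mul_zero]

theorem span_monomial_box : Submodule.span k (monomial q a b '' box a b) = ⊤ := by
  set W := Submodule.span k (monomial q a b '' box a b)
  have hmem (p : ℕ × ℕ) : monomial q a b p ∈ W := by
    by_cases hp : p ∈ box a b
    · exact Submodule.subset_span ⟨p, hp, rfl⟩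
    · rw [monomial_eq_zero q a b hp]
      exact W.zero_mem
  have hmul : W * W ≤ W := by
    rw [Submodule.span_mul_span, Submodule.span_le]
    rintro _ ⟨_, ⟨p, -, rfl⟩, _, ⟨r, -, rfl⟩, rfl⟩
    change monomial q a b p * monomial q a b r ∈ W
    rw [monomial_mul]
    exact W.smul_mem _ (hmem _)
  let S : Subalgebra k (QCI k q a b) := W.toSubalgebra (by simpa [monomial] using hmem 0)
    fun _ _ hx hy => hmul (Submodule.mul_mem_mul hx hy)
  have hS : Algebra.adjoin k {qciX k q a b, qciY k q a b} ≤ S := by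
    refine Algebra.adjoin_le ?_
    rintro _ (rfl | rfl)
    · change _ ∈ W
      simpa [monomial] using hmem (0, 1)
    · change _ ∈ W
      simpa [monomial] using hmem (1, 0)
  rw [adjoin_qciX_qciY, top_le_iff] at hS
  simpa [S] using congrArg Subalgebra.toSubmodule hS

noncomputable def shiftX : (ℕ × ℕ →₀ k) →ₗ[k] (ℕ × ℕ →₀ k) :=
  linearCombination k fun p => if p.2 + 1 < a then single (p.1, p.2 + 1) (q ^ p.1) else 0

noncomputable def shiftY : (ℕ × ℕ →₀ k) →ₗ[k] (ℕ × ℕ →₀ k) :=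
  linearCombination k fun p => if p.1 + 1 < b then single (p.1 + 1, p.2) 1 else 0

lemma shiftX_single (u v : ℕ) (c : k) :
    shiftX q a (single (u, v) c) = if v + 1 < a then single (u, v + 1) (q ^ u * c) else 0 := by
  simp [shiftX, linearCombination_single, smul_ite, smul_single, mul_comm]

lemma shiftY_single (u v : ℕ) (c : k) :
    shiftY b (single (u, v) c) = if u + 1 < b then single (u + 1, v) c else 0 := by
  simp [shiftY, linearCombination_single, smul_ite, smul_single]

lemma shiftX_pow_single {v : ℕ} (hv : v < a) (j u : ℕ) (c : k) :
    (shiftX q a ^ j) (single (u, v) c) =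
      if v + j < a then single (u, v + j) (q ^ (j * u) * c) else 0 := by
  induction j with
  | zero => simp [hv]
  | succ j ih =>
    rw [pow_succ', Module.End.mul_apply, ih]
    split_ifs with h₁ h₂ h₂
    · rw [shiftX_single, if_pos (by omega), ← add_assoc, add_one_mul, pow_add, mul_assoc,
        mul_left_comm]
    · rw [shiftX_single, if_neg (by omega)]
    · omega
    · exact map_zero _

lemma shiftY_pow_single {u : ℕ} (hu : u < b) (j v : ℕ) (c : k) :
    (shiftY b ^ j) (single (u, v) c) = if u + j < b then single (u + j, v) c else 0 := by
  induction j with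
  | zero => simp [hu]
  | succ j ih =>
    rw [pow_succ', Module.End.mul_apply, ih]
    split_ifs with h₁ h₂ h₂
    · rw [shiftY_single, if_pos (by omega), add_assoc]
    · rw [shiftY_single, if_neg (by omega)]
    · omega
    · exact map_zero _

lemma shiftX_pow_eq_zero (ha : 0 < a) : shiftX q a ^ a = 0 := by
  refine lhom_ext fun ⟨u, v⟩ c => ?_
  rcases lt_or_ge v a with hv | hv
  · simp [shiftX_pow_single q a hv]
  · obtain ⟨n, rfl⟩ := Nat.exists_eq_add_one_of_ne_zero ha.ne'
    rw [pow_succ, Module.End.mul_apply, shiftX_single, if_neg (by omega), map_zero,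
      LinearMap.zero_apply]

lemma shiftY_pow_eq_zero (hb : 0 < b) : shiftY (k := k) b ^ b = 0 := by
  refine lhom_ext fun ⟨u, v⟩ c => ?_
  rcases lt_or_ge u b with hu | hu
  · simp [shiftY_pow_single b hu]
  · obtain ⟨n, rfl⟩ := Nat.exists_eq_add_one_of_ne_zero hb.ne'
    rw [pow_succ, Module.End.mul_apply, shiftY_single, if_neg (by omega), map_zero,
      LinearMap.zero_apply]

lemma shiftX_mul_shiftY : shiftX q a * shiftY b = q • (shiftY b * shiftX q a) :=
  lhom_ext fun ⟨u, v⟩ c => by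
    simp only [Module.End.mul_apply, LinearMap.smul_apply, shiftX_single, shiftY_single]
    split_ifs <;> simp only [shiftX_single, shiftY_single, map_zero, smul_zero, smul_single, *,
      if_true, if_false, smul_eq_mul, pow_succ]
    ring_nf

variable {q a b}

noncomputable def shiftRep (ha : 0 < a) (hb : 0 < b) :
    QCI k q a b →ₐ[k] Module.End k (ℕ × ℕ →₀ k) :=
  RingQuot.liftAlgHom k ⟨FreeAlgebra.lift k fun t => if t then shiftX q a else shiftY b, by
    rintro _ _ ⟨⟩ <;> simp [shiftX_pow_eq_zero q a ha, shiftY_pow_eq_zero b hb, shiftX_mul_shiftY]⟩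

lemma shiftRep_qciX (ha : 0 < a) (hb : 0 < b) : shiftRep ha hb (qciX k q a b) = shiftX q a := by
  simp [shiftRep, qciX]

lemma shiftRep_qciY (ha : 0 < a) (hb : 0 < b) : shiftRep ha hb (qciY k q a b) = shiftY b := by
  simp [shiftRep, qciY]

variable (q a b)

lemma shiftRep_monomial_single (ha : 0 < a) (hb : 0 < b) {p : ℕ × ℕ} (hp : p ∈ box a b) :
    shiftRep ha hb (monomial q a b p) (single (0, 0) 1) = single p 1 := by
  obtain ⟨u, v⟩ := p
  rw [mem_box] at hp
  simp [monomial, shiftRep_qciX, shiftRep_qciY, shiftX_pow_single q a ha,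
    shiftY_pow_single b hb, hp]

theorem linearIndepOn_monomial (ha : 0 < a) (hb : 0 < b) :
    LinearIndepOn k (monomial q a b) (box a b) := by
  refine LinearIndepOn.of_comp ((LinearMap.applyₗ (single (0, 0) 1)).comp
    (shiftRep ha hb).toLinearMap) ?_
  refine ((linearIndependent_single_one k (ℕ × ℕ)).linearIndepOn _).congr fun p hp => ?_
  simp [shiftRep_monomial_single q a b ha hb hp]

lemma monomial_mem_span_compl_corners {p : ℕ × ℕ} (hp : p ∉ corners a b) :
    monomial q a b p ∈ Submodule.span k (monomial q a b '' ↑(box a b \ corners a b)) := by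
  by_cases hpb : p ∈ box a b
  · exact Submodule.subset_span ⟨p, Finset.mem_sdiff.mpr ⟨hpb, hp⟩, rfl⟩
  · rw [monomial_eq_zero q a b hpb]
    exact Submodule.zero_mem _

variable {q a b}

def IsNakayamaDifferential (d : QCI k q a b × QCI k q a b →ₗ[k] QCI k q a b) : Prop :=
  (∀ u v : ℕ, u < b → v < a →
    d (monomial q a b (u, v), 0) = (q ^ ((u : ℤ) + 1 - b) - 1) • monomial q a b (u, v + 1)) ∧
  (∀ u v : ℕ, u < b → v < a →
    d (0, monomial q a b (u, v)) = (q ^ ((a : ℤ) - 1) - q ^ (v : ℤ)) • monomial q a b (u + 1, v))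

lemma range_le_of_forall_monomial_mem {M : Type*} [AddCommGroup M] [Module k M]
    (f : QCI k q a b →ₗ[k] M) (W : Submodule k M)
    (hf : ∀ p ∈ box a b, f (monomial q a b p) ∈ W) : LinearMap.range f ≤ W := by
  rw [LinearMap.range_eq_map, ← span_monomial_box, Submodule.map_span_le]
  rintro _ ⟨p, hp, rfl⟩
  exact hf p hp

theorem range_le_span_compl_corners {d : QCI k q a b × QCI k q a b →ₗ[k] QCI k q a b}
    (hd : IsNakayamaDifferential d) :
    LinearMap.range d ≤ Submodule.span k (monomial q a b '' ↑(box a b \ corners a b)) := by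
  have not_mem_corners {u v : ℕ} (h : (u ≠ 0 ∨ v ≠ 0) ∧ (u ≠ b - 1 ∨ v ≠ a - 1)) :
      (u, v) ∉ corners a b := by
    simp only [corners, Finset.mem_insert, Finset.mem_singleton, Prod.mk.injEq]
    omega
  rw [← LinearMap.coprod_comp_inl_inr d, LinearMap.range_coprod, sup_le_iff]
  constructor
  · refine range_le_of_forall_monomial_mem _ _ fun ⟨u, v⟩ hp => ?_
    rw [mem_box] at hp
    rw [LinearMap.comp_apply, LinearMap.inl_apply, hd.1 u v hp.1 hp.2]
    by_cases hu : u = b - 1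
    · rw [show (u : ℤ) + 1 - b = 0 by omega, zpow_zero, sub_self, zero_smul]
      exact Submodule.zero_mem _
    · exact Submodule.smul_mem _ _
        (monomial_mem_span_compl_corners q a b (not_mem_corners (by omega)))
  · refine range_le_of_forall_monomial_mem _ _ fun ⟨u, v⟩ hp => ?_
    rw [mem_box] at hp
    rw [LinearMap.comp_apply, LinearMap.inr_apply, hd.2 u v hp.1 hp.2]
    by_cases hv : v = a - 1
    · rw [show (a : ℤ) - 1 = v by omega, sub_self, zero_smul]
      exact Submodule.zero_mem _
    · exact Submodule.smul_mem _ _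
        (monomial_mem_span_compl_corners q a b (not_mem_corners (by omega)))

theorem monomial_mem_range (hq0 : q ≠ 0) (hq : ∀ n : ℕ, 1 ≤ n → q ^ n ≠ 1)
    (ha : 2 ≤ a) (hb : 2 ≤ b) {d : QCI k q a b × QCI k q a b →ₗ[k] QCI k q a b}
    (hd : IsNakayamaDifferential d) {p : ℕ × ℕ} (hp : p ∈ box a b \ corners a b) :
    monomial q a b p ∈ LinearMap.range d := by
  obtain ⟨u, v⟩ := p
  simp only [corners, Finset.mem_sdiff, mem_box, Finset.mem_insert, Finset.mem_singleton,
    Prod.mk.injEq] at hp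
  obtain ⟨⟨hu, hv⟩, hp⟩ := hp
  have hinj := zpow_injective_of_pow_ne_one hq0 hq
  by_cases h : v ≠ 0 ∧ u ≠ b - 1
  · have hc : q ^ ((u : ℤ) + 1 - b) - 1 ≠ 0 := by
      rw [sub_ne_zero, ← zpow_zero q]
      exact hinj.ne (by omega)
    refine d.mem_range_of_apply_eq_smul hc (m := (monomial q a b (u, v - 1), 0)) ?_
    rw [hd.1 u (v - 1) hu (by omega), Nat.sub_add_cancel (by omega)]
  · have hc : q ^ ((a : ℤ) - 1) - q ^ (v : ℤ) ≠ 0 := sub_ne_zero.mpr (hinj.ne (by omega))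
    refine d.mem_range_of_apply_eq_smul hc (m := (0, monomial q a b (u - 1, v))) ?_
    rw [hd.2 (u - 1) v (by omega) hv, Nat.sub_add_cancel (by omega)]

theorem range_eq_span_compl_corners (hq0 : q ≠ 0) (hq : ∀ n : ℕ, 1 ≤ n → q ^ n ≠ 1)
    (ha : 2 ≤ a) (hb : 2 ≤ b) {d : QCI k q a b × QCI k q a b →ₗ[k] QCI k q a b}
    (hd : IsNakayamaDifferential d) :
    LinearMap.range d = Submodule.span k (monomial q a b '' ↑(box a b \ corners a b)) :=
  (range_le_span_compl_corners hd).antisymm <| Submodule.span_le.mpr <| by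
    rintro _ ⟨p, hp, rfl⟩
    exact monomial_mem_range hq0 hq ha hb hd hp

end QCI

open QCI

theorem stmt_18_general (k : Type*) [Field k] (q : k) (hq0 : q ≠ 0)
    (hq : ∀ n : ℕ, 1 ≤ n → q ^ n ≠ 1)
    (a b : ℕ) (ha : 2 ≤ a) (hb : 2 ≤ b)
    (x y : QCI k q a b) (hx : x = qciX k q a b) (hy : y = qciY k q a b)
    (d : QCI k q a b × QCI k q a b →ₗ[k] QCI k q a b)
    (hd1 : ∀ u v : ℕ, u < b → v < a →
      d (y ^ u * x ^ v, 0) = (q ^ ((u : ℤ) + 1 - b) - 1) • (y ^ u * x ^ (v + 1)))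
    (hd2 : ∀ u v : ℕ, u < b → v < a →
      d (0, y ^ u * x ^ v) = (q ^ ((a : ℤ) - 1) - q ^ (v : ℤ)) • (y ^ (u + 1) * x ^ v)) :
    (∀ u v : ℕ, u < b → v < a →
        (y ^ u * x ^ v ∈ LinearMap.range d ↔
          ¬((u = 0 ∧ v = 0) ∨ (u = b - 1 ∧ v = a - 1)))) ∧
      Module.finrank k (LinearMap.range d) = a * b - 2 := by
  subst hx hy
  have hrange := range_eq_span_compl_corners hq0 hq ha hb (d := d) ⟨hd1, hd2⟩
  have hli := linearIndepOn_monomial q a b (by omega) (by omega)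
  have hcorners : corners a b ⊆ box a b := by
    simp only [corners, Finset.insert_subset_iff, Finset.singleton_subset_iff, mem_box]
    omega
  refine ⟨fun u v hu hv => ?_, ?_⟩
  · change monomial q a b (u, v) ∈ _ ↔ _
    rw [hrange, hli.apply_mem_span_image_iff Finset.sdiff_subset (by simp [hu, hv])]
    simp [corners, hu, hv]
  · rw [hrange, (hli.mono Finset.sdiff_subset).finrank_span_image,
      Finset.card_sdiff_of_subset hcorners, box, corners, Finset.card_product, Finset.card_range,
      Finset.card_range, Finset.card_pair (by simp only [ne_eq, Prod.mk.injEq]; omega), mul_comm]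

/-- for `A = k⟨X,Y⟩/(X^a, XY - qYX, Y^b)` with `a, b ≥ 2` and `q` not a root
of unity (in particular `q ≠ 0`), and `d : A ⊕ A → A` the `k`-linear map given on the basis
by `d(y^u x^v, 0) = (q^{u+1-b} - 1) y^u x^{v+1}` and `d(0, y^u x^v) = (q^{a-1} - q^v) y^{u+1} x^v`
(these formulas arise from the Nakayama automorphism `ν(x) = q^{1-b} x`, `ν(y) = q^{a-1} y`),
a basis monomial `y^u x^v` lies in the image of `d` if and only if
`(u,v) ∉ {(0,0), (b-1, a-1)}`; hence `dim_k (Im d) = ab - 2`. -/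
theorem stmt_18 (k : Type*) [Field k] (q : k) (hq0 : q ≠ 0)
    (hq : ∀ n : ℕ, 1 ≤ n → q ^ n ≠ 1)
    (a b : ℕ) (ha : 2 ≤ a) (hb : 2 ≤ b)
    (x y : QCI k q a b) (hx : x = qciX k q a b) (hy : y = qciY k q a b)
    (ν : QCI k q a b ≃ₐ[k] QCI k q a b)
    (hνx : ν x = q ^ ((1 : ℤ) - b) • x) (hνy : ν y = q ^ ((a : ℤ) - 1) • y)
    (d : QCI k q a b × QCI k q a b →ₗ[k] QCI k q a b)
    (hd1 : ∀ u v : ℕ, u < b → v < a →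
      d (y ^ u * x ^ v, 0) = (q ^ ((u : ℤ) + 1 - b) - 1) • (y ^ u * x ^ (v + 1)))
    (hd2 : ∀ u v : ℕ, u < b → v < a →
      d (0, y ^ u * x ^ v) = (q ^ ((a : ℤ) - 1) - q ^ (v : ℤ)) • (y ^ (u + 1) * x ^ v)) :
    (∀ u v : ℕ, u < b → v < a →
        (y ^ u * x ^ v ∈ LinearMap.range d ↔
          ¬((u = 0 ∧ v = 0) ∨ (u = b - 1 ∧ v = a - 1)))) ∧
      Module.finrank k (LinearMap.range d) = a * b - 2 :=
  stmt_18_general k q hq0 hq a b ha hb x y hx hy d hd1 hd2
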